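/- arXiv:2202.06399 — 3 statements merged into one kernel-verified Lean document; each statement's English description precedes it below -/
import Mathlib

section
/- Let f : (0,∞) × ℝ → ℝ be C¹ in its first variable ξ, and suppose there exist functions c_par(S), c_perp(S) such that for all ξ > 0 and all S: (2/3) ξ² f(ξ,S) − (2/3) ξ³ ∂f/∂ξ(ξ,S) = c_par(S) and (2/(3ξ)) f(ξ,S) + (1/3) ∂f/∂ξ(ξ,S) = c_perp(S). Then f(ξ,S) = c_perp(S) ξ + c_par(S)/(2 ξ²). -/
/-- Solution of the pair of ODEs in `ξ` arising from consistency of the ansatz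
`e = ρ^{2/3} f(ξ,S)` with the double adiabatic laws:
`f(ξ,S) = c⊥(S) ξ + c∥(S)/(2ξ²)`. -/
theorem similarity_function_solution
    (f : ℝ → ℝ → ℝ) (cpar cperp : ℝ → ℝ)
    (hf : ∀ S : ℝ, ∀ ξ ∈ Set.Ioi (0 : ℝ), DifferentiableAt ℝ (fun x => f x S) ξ)
    (h1 : ∀ S : ℝ, ∀ ξ ∈ Set.Ioi (0 : ℝ),
      (2 / 3) * ξ ^ 2 * f ξ S - (2 / 3) * ξ ^ 3 * deriv (fun x => f x S) ξ = cpar S)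
    (h2 : ∀ S : ℝ, ∀ ξ ∈ Set.Ioi (0 : ℝ),
      (2 / (3 * ξ)) * f ξ S + (1 / 3) * deriv (fun x => f x S) ξ = cperp S) :
    ∀ S : ℝ, ∀ ξ ∈ Set.Ioi (0 : ℝ), f ξ S = cperp S * ξ + cpar S / (2 * ξ ^ 2) := by
  intro S ξ hξ
  have hξ0 : (0:ℝ) < ξ := hξ
  have e1 := h1 S ξ hξ
  have e2 := h2 S ξ hξ
  have hne : ξ ≠ 0 := ne_of_gt hξ0
  field_simp at e1 e2 ⊢
  nlinarith [sq_nonneg ξ, e1, e2, mul_pos hξ0 hξ0]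
end

section
/- Let B : ℝ³ → ℝ³ be a C² vector field with ∇·B = 0 and |B| > 0, let τ = B/|B|, and let p_Δ : ℝ³ → ℝ be C¹. Setting Ω = (p_Δ/|B|) τ, the identity B × (∇ × Ω) = ∇p_Δ − p_Δ ∇(ln |B|) − ∇·(p_Δ τ ⊗ τ) holds, where (∇·(p_Δ τ⊗τ))_i = ∂_j(p_Δ τ_i τ_j). -/
open scoped BigOperators

noncomputable section

/-- Space: ℝ³ as functions `Fin 3 → ℝ`. -/
abbrev V3 := Fin 3 → ℝ

/-- Partial derivative of a scalar field in the `i`-th coordinate direction. -/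
def pd (i : Fin 3) (f : V3 → ℝ) (x : V3) : ℝ := fderiv ℝ f x (Pi.single i 1)

/-- Euclidean dot product on ℝ³. -/
def dot3 (a b : V3) : ℝ := ∑ i, a i * b i

/-- Cross product on ℝ³. -/
def cross3 (a b : V3) : V3 :=
  ![a 1 * b 2 - a 2 * b 1, a 2 * b 0 - a 0 * b 2, a 0 * b 1 - a 1 * b 0]

/-- Divergence of a vector field on ℝ³. -/
def div3 (F : V3 → V3) (x : V3) : ℝ := ∑ i, pd i (fun y => F y i) x

/-- Curl of a vector field on ℝ³. -/
def curl3 (F : V3 → V3) (x : V3) : V3 :=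
  ![pd 1 (fun y => F y 2) x - pd 2 (fun y => F y 1) x,
    pd 2 (fun y => F y 0) x - pd 0 (fun y => F y 2) x,
    pd 0 (fun y => F y 1) x - pd 1 (fun y => F y 0) x]

/-- Gradient of a scalar field on ℝ³. -/
def grad3 (f : V3 → ℝ) (x : V3) : V3 := fun i => pd i f x

/-- Euclidean norm on ℝ³. -/
def norm3 (a : V3) : ℝ := Real.sqrt (dot3 a a)

/-- Unit vector along a vector field. -/
def tau3 (B : V3 → V3) (x : V3) : V3 := fun i => B x i / norm3 (B x)

/-! With `q = |B|²` and `f = p_Δ / q` one has `Ω = f B` and `p_Δ τ_i τ_j = f B_i B_j`, so no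
square roots remain. Then `B × (∇ × (f B)) = q ∇f − (B·∇f) B + f (½ ∇q − (B·∇) B)`, while
`∂_j (f B_i B_j) = B_i (B·∇f) + f (B·∇) B_i` because `∇·B = 0`. The transport terms cancel,
and `q ∇f + ½ f ∇q = ∇p_Δ − p_Δ ∇q / (2q) = ∇p_Δ − p_Δ ∇ ln |B|`. -/

section PartialDerivatives

variable {x : V3} {i : Fin 3}

lemma pd_sum {ι : Type*} (s : Finset ι) {f : ι → V3 → ℝ}
    (hf : ∀ k ∈ s, DifferentiableAt ℝ (f k) x) :
    pd i (fun y => ∑ k ∈ s, f k y) x = ∑ k ∈ s, pd i (f k) x := by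
  simp only [pd, fderiv_fun_sum hf, sum_apply]

lemma pd_mul {f g : V3 → ℝ} (hf : DifferentiableAt ℝ f x) (hg : DifferentiableAt ℝ g x) :
    pd i (fun y => f y * g y) x = pd i f x * g x + f x * pd i g x := by
  simp only [pd, fderiv_fun_mul hf hg, add_apply, smul_apply, smul_eq_mul]
  ring

lemma pd_comp {f : V3 → ℝ} {g : ℝ → ℝ} {g' : ℝ} (hf : DifferentiableAt ℝ f x)
    (hg : HasDerivAt g g' (f x)) :
    pd i (fun y => g (f y)) x = g' * pd i f x := by
  simp only [pd]
  rw [show (fun y => g (f y)) = g ∘ f from rfl,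
    (hg.comp_hasFDerivAt x hf.hasFDerivAt).fderiv, smul_apply, smul_eq_mul]

lemma pd_div {f g : V3 → ℝ} (hf : DifferentiableAt ℝ f x) (hg : DifferentiableAt ℝ g x)
    (hgx : g x ≠ 0) :
    pd i (fun y => f y / g y) x = (pd i f x * g x - f x * pd i g x) / g x ^ 2 := by
  simp only [div_eq_mul_inv]
  rw [pd_mul hf (hg.fun_inv hgx), pd_comp hg (hasDerivAt_inv hgx)]
  field_simp
  ring

end PartialDerivatives

lemma cross3_add (a b c : V3) : cross3 a (b + c) = cross3 a b + cross3 a c := by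
  ext k
  fin_cases k <;>
    simp only [cross3, Pi.add_apply, Fin.zero_eta, Fin.mk_one, Fin.reduceFinMk,
      Matrix.cons_val_zero, Matrix.cons_val_one, Matrix.cons_val] <;>
    ring

lemma cross3_smul (a b : V3) (c : ℝ) : cross3 a (c • b) = c • cross3 a b := by
  ext k
  fin_cases k <;>
    simp only [cross3, Pi.smul_apply, smul_eq_mul, Fin.zero_eta, Fin.mk_one, Fin.reduceFinMk,
      Matrix.cons_val_zero, Matrix.cons_val_one, Matrix.cons_val] <;>
    ring

lemma cross3_cross3_self (a b : V3) : cross3 a (cross3 b a) = dot3 a a • b - dot3 a b • a := by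
  ext k
  fin_cases k <;>
    simp only [cross3, dot3, Fin.sum_univ_three, Pi.sub_apply, Pi.smul_apply, smul_eq_mul,
      Fin.zero_eta, Fin.mk_one, Fin.reduceFinMk,
      Matrix.cons_val_zero, Matrix.cons_val_one, Matrix.cons_val] <;>
    ring

section VectorCalculus

variable {F : V3 → V3} {x : V3}

lemma pd_dot3_self (hF : ∀ k, DifferentiableAt ℝ (fun y => F y k) x) (i : Fin 3) :
    pd i (fun y => dot3 (F y) (F y)) x = 2 * ∑ k, F x k * pd i (fun y => F y k) x := by
  simp only [dot3]
  rw [pd_sum _ fun k _ => (hF k).fun_mul (hF k), Finset.mul_sum]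
  exact Finset.sum_congr rfl fun k _ => by rw [pd_mul (hF k) (hF k)]; ring

lemma curl3_smul {f : V3 → ℝ} (hf : DifferentiableAt ℝ f x)
    (hF : ∀ k, DifferentiableAt ℝ (fun y => F y k) x) :
    curl3 (fun y => f y • F y) x = cross3 (grad3 f x) (F x) + f x • curl3 F x := by
  ext k
  fin_cases k <;>
    simp only [curl3, cross3, grad3, Pi.add_apply, Pi.smul_apply, smul_eq_mul, Matrix.smul_cons,
      Matrix.smul_empty, pd_mul hf (hF _), Fin.zero_eta, Fin.mk_one, Fin.reduceFinMk,
      Matrix.cons_val_zero, Matrix.cons_val_one, Matrix.cons_val] <;>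
    ring

lemma cross3_curl3 (i : Fin 3) :
    cross3 (F x) (curl3 F x) i
      = ∑ j, F x j * pd i (fun y => F y j) x - ∑ j, F x j * pd j (fun y => F y i) x := by
  fin_cases i <;>
    simp only [cross3, curl3, Fin.sum_univ_three, Fin.zero_eta, Fin.mk_one, Fin.reduceFinMk,
      Matrix.cons_val_zero, Matrix.cons_val_one, Matrix.cons_val] <;>
    ring

lemma sum_pd_mul_mul (hF : ∀ k, DifferentiableAt ℝ (fun y => F y k) x) {f : V3 → ℝ}
    (hf : DifferentiableAt ℝ f x) (i : Fin 3) :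
    ∑ j, pd j (fun y => f y * F y i * F y j) x
      = F x i * dot3 (F x) (grad3 f x) + f x * ∑ j, F x j * pd j (fun y => F y i) x
        + f x * F x i * div3 F x := by
  simp only [pd_mul (hf.fun_mul (hF i)) (hF _), pd_mul hf (hF i), div3, dot3, grad3,
    Fin.sum_univ_three]
  ring

end VectorCalculus

lemma norm3_sq (a : V3) : norm3 a ^ 2 = dot3 a a :=
  Real.sq_sqrt (Finset.sum_nonneg fun i _ => mul_self_nonneg (a i))

lemma log_norm3 (a : V3) : Real.log (norm3 a) = Real.log (dot3 a a) / 2 := by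
  rw [← norm3_sq, Real.log_pow]; ring

lemma div_norm3_smul_tau3 (B : V3 → V3) (y : V3) (c : ℝ) :
    (c / norm3 (B y)) • tau3 B y = (c / dot3 (B y) (B y)) • B y := by
  ext k
  simp only [tau3, Pi.smul_apply, smul_eq_mul, ← norm3_sq]
  ring

lemma mul_tau3_mul_tau3 (B : V3 → V3) (y : V3) (c : ℝ) (i j : Fin 3) :
    c * tau3 B y i * tau3 B y j = c / dot3 (B y) (B y) * B y i * B y j := by
  rw [tau3, tau3, ← norm3_sq]
  ring

/-- With `∇·B = 0`, `|B| > 0`, `τ = B/|B|` and `Ω = (pΔ/|B|)τ`, the identity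
`B × (∇×Ω) = ∇pΔ − pΔ ∇ln|B| − ∇·(pΔ τ⊗τ)` holds componentwise. -/
theorem anisotropy_curl_identity
    (B : V3 → V3) (pΔ : V3 → ℝ)
    (hB : ContDiff ℝ 2 B) (hp : ContDiff ℝ 1 pΔ)
    (hdiv : ∀ x, div3 B x = 0) (hpos : ∀ x, 0 < norm3 (B x)) :
    ∀ (x : V3) (i : Fin 3),
      cross3 (B x) (curl3 (fun y => (pΔ y / norm3 (B y)) • tau3 B y) x) i
        = grad3 pΔ x i
          - pΔ x * grad3 (fun y => Real.log (norm3 (B y))) x i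
          - ∑ j, pd j (fun y => pΔ y * tau3 B y i * tau3 B y j) x := by
  intro x i
  have hBk (k : Fin 3) : DifferentiableAt ℝ (fun y => B y k) x :=
    differentiableAt_pi.1 (hB.differentiable two_ne_zero x) k
  have hpx : DifferentiableAt ℝ pΔ x := hp.differentiable one_ne_zero x
  have hqx : dot3 (B x) (B x) ≠ 0 := by rw [← norm3_sq]; exact (pow_pos (hpos x) 2).ne'
  have hqd : DifferentiableAt ℝ (fun y => dot3 (B y) (B y)) x := by simp only [dot3]; fun_prop
  have hfd : DifferentiableAt ℝ (fun y => pΔ y / dot3 (B y) (B y)) x :=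
    hpx.fun_mul (hqd.fun_inv hqx)
  simp only [div_norm3_smul_tau3, mul_tau3_mul_tau3, log_norm3]
  rw [curl3_smul hfd hBk, cross3_add, cross3_smul, cross3_cross3_self]
  simp only [Pi.add_apply, Pi.sub_apply, Pi.smul_apply, smul_eq_mul, cross3_curl3,
    sum_pd_mul_mul hBk hfd, hdiv x, grad3]
  rw [pd_comp hqd ((Real.hasDerivAt_log hqx).div_const 2), pd_div hpx hqd hqx,
    pd_dot3_self hBk]
  field_simp
  ring
end
end

section
/- Let B be a divergence-free C² vector field on ℝ³ with |B| > 0, τ = B/|B|, and let ρ > 0, S, and the C¹ functions c_par(S), c_perp(S) be given, with p_par = c_par(S) ρ³/|B|², p_perp = c_perp(S) ρ |B|, pressure tensor 𝗉 = p_perp I + (p_par − p_perp) τ⊗τ, and enthalpy h = (3p_par + 2p_perp)/(2ρ). Then τ · ( (1/ρ)∇·𝗉 − ∇h ) = −( (p_par/(2ρ)) τ·∇ ln c_par(S) + (p_perp/ρ) τ·∇ ln c_perp(S) ). -/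
/-!
Contracting the divergence of the gyrotropic tensor `p⊥ I + (p∥ - p⊥) τ ⊗ τ` with the unit field
`τ` leaves `τ·∇p∥ + (p∥ - p⊥) ∇·τ`, since `|τ| = 1` forces `τ·∂ⱼτ = 0`; and `∇·B = 0` turns
`∇·τ = ∇·(B/|B|)` into `-τ·∇ ln |B|`. What remains is a scalar identity between directional
derivatives: the logarithmic derivatives of `p∥ ∝ ρ³/|B|²` and `p⊥ ∝ ρ|B|` carry the same
`τ·∇ ln ρ` and `τ·∇ ln |B|` terms as the enthalpy, and these cancel, leaving only the entropy
terms `τ·∇ ln c(S)`.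
-/

open scoped BigOperators

noncomputable section

open Filter Topology

section ScalarFields

variable {E : Type*} [NormedAddCommGroup E] [NormedSpace ℝ E] {f g : E → ℝ} {x : E}

theorem fderiv_inv_apply (hg : DifferentiableAt ℝ g x) (hg₀ : g x ≠ 0) (v : E) :
    fderiv ℝ (fun y => (g y)⁻¹) x v = -fderiv ℝ g x v / g x ^ 2 := by
  have hinv : HasFDerivAt (fun y => (g y)⁻¹) (-(g x ^ 2)⁻¹ • fderiv ℝ g x) x :=
    (hasDerivAt_inv hg₀).comp_hasFDerivAt x hg.hasFDerivAt
  simp [hinv.fderiv, div_eq_mul_inv, mul_comm]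

theorem fderiv_div_apply (hf : DifferentiableAt ℝ f x) (hg : DifferentiableAt ℝ g x)
    (hg₀ : g x ≠ 0) (v : E) :
    fderiv ℝ (fun y => f y / g y) x v
      = (fderiv ℝ f x v * g x - f x * fderiv ℝ g x v) / g x ^ 2 := by
  simp only [div_eq_mul_inv]
  rw [fderiv_fun_mul (d := fun y => (g y)⁻¹) hf (hg.inv hg₀)]
  simp only [add_apply, smul_apply, smul_eq_mul]
  rw [fderiv_inv_apply hg hg₀]
  field_simp
  ring

theorem cgl_fderiv_identity {c₁ c₂ ρ b : E → ℝ} (hc₁ : DifferentiableAt ℝ c₁ x)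
    (hc₂ : DifferentiableAt ℝ c₂ x) (hρ : DifferentiableAt ℝ ρ x) (hb : DifferentiableAt ℝ b x)
    (hc₁₀ : c₁ x ≠ 0) (hc₂₀ : c₂ x ≠ 0) (hρ₀ : ρ x ≠ 0) (hb₀ : b x ≠ 0) (v : E) :
    1 / ρ x * (fderiv ℝ (fun y => c₁ y * ρ y ^ 3 / b y ^ 2) x v
        - (c₁ x * ρ x ^ 3 / b x ^ 2 - c₂ x * ρ x * b x) * (fderiv ℝ b x v / b x))
      - fderiv ℝ (fun y => (3 * (c₁ y * ρ y ^ 3 / b y ^ 2) + 2 * (c₂ y * ρ y * b y))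
          / (2 * ρ y)) x v
      = -(c₁ x * ρ x ^ 3 / b x ^ 2 / (2 * ρ x) * fderiv ℝ (fun y => Real.log (c₁ y)) x v
          + c₂ x * ρ x * b x / ρ x * fderiv ℝ (fun y => Real.log (c₂ y)) x v) := by
  have hpar : DifferentiableAt ℝ (fun y => c₁ y * ρ y ^ 3 / b y ^ 2) x := by
    fun_prop (disch := exact pow_ne_zero 2 hb₀)
  have hperp : DifferentiableAt ℝ (fun y => c₂ y * ρ y * b y) x := by fun_prop
  have hDpar : fderiv ℝ (fun y => c₁ y * ρ y ^ 3 / b y ^ 2) x v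
      = c₁ x * ρ x ^ 3 / b x ^ 2 * (fderiv ℝ c₁ x v / c₁ x + 3 * (fderiv ℝ ρ x v / ρ x)
          - 2 * (fderiv ℝ b x v / b x)) := by
    rw [fderiv_div_apply (f := fun y => c₁ y * ρ y ^ 3) (by fun_prop) (by fun_prop)
      (pow_ne_zero 2 hb₀), fderiv_fun_mul hc₁ (hρ.fun_pow 3), fderiv_fun_pow 3 hρ,
      fderiv_fun_pow 2 hb]
    simp only [add_apply, smul_apply, smul_eq_mul, nsmul_eq_mul]
    field_simp
    ring
  have hDperp : fderiv ℝ (fun y => c₂ y * ρ y * b y) x v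
      = c₂ x * ρ x * b x * (fderiv ℝ c₂ x v / c₂ x + fderiv ℝ ρ x v / ρ x
          + fderiv ℝ b x v / b x) := by
    rw [fderiv_fun_mul (hc₂.fun_mul hρ) hb, fderiv_fun_mul hc₂ hρ]
    simp only [add_apply, smul_apply, smul_eq_mul]
    field_simp
    ring
  rw [fderiv_div_apply (f := fun y => 3 * (c₁ y * ρ y ^ 3 / b y ^ 2) + 2 * (c₂ y * ρ y * b y))
      (by fun_prop) (by fun_prop) (mul_ne_zero two_ne_zero hρ₀),
    fderiv_fun_add (hpar.const_mul 3) (hperp.const_mul 2), fderiv_const_mul hpar,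
    fderiv_const_mul hperp, fderiv_const_mul hρ, fderiv.log hc₁ hc₁₀, fderiv.log hc₂ hc₂₀]
  simp only [add_apply, smul_apply, smul_eq_mul, hDpar, hDperp]
  field_simp
  ring

end ScalarFields

theorem sum_mul_pd_eq_fderiv (v : V3) (f : V3 → ℝ) (x : V3) :
    ∑ i, v i * pd i f x = fderiv ℝ f x v := by
  conv_rhs => rw [← Finset.univ_sum_single v, map_sum]
  refine Finset.sum_congr rfl fun i _ => ?_
  rw [pd, ← smul_eq_mul, ← map_smul, ← Pi.single_smul', smul_eq_mul, mul_one]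

theorem differentiableAt_norm3 {a : V3} (ha : norm3 a ≠ 0) : DifferentiableAt ℝ norm3 a := by
  refine DifferentiableAt.sqrt ?_ fun h => ha (by rw [norm3, h, Real.sqrt_zero])
  simp only [dot3]
  fun_prop

theorem dot3_tau3_self {B : V3 → V3} {y : V3} (hB : norm3 (B y) ≠ 0) :
    dot3 (tau3 B y) (tau3 B y) = 1 := by
  have hsq : dot3 (B y) (B y) = norm3 (B y) ^ 2 :=
    (Real.sq_sqrt (Finset.sum_nonneg fun i _ => mul_self_nonneg (B y i))).symm
  simp only [dot3, tau3, div_mul_div_comm, ← Finset.sum_div] at hsq ⊢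
  rw [hsq, ← sq, div_self (pow_ne_zero 2 hB)]

theorem sum_mul_pd_eq_zero_of_eventually_dot3_self_eq_one {τ : V3 → V3} {x : V3}
    (hτ : ∀ i, DifferentiableAt ℝ (fun y => τ y i) x)
    (hunit : ∀ᶠ y in 𝓝 x, dot3 (τ y) (τ y) = 1) (j : Fin 3) :
    ∑ i, τ x i * pd j (fun y => τ y i) x = 0 := by
  have hconst : pd j (fun y => dot3 (τ y) (τ y)) x = 0 := by
    rw [pd, Filter.EventuallyEq.fderiv_eq (f := fun _ => (1 : ℝ)) hunit]
    simp
  simp only [pd, dot3] at hconst ⊢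
  rw [fderiv_fun_sum fun i _ => (hτ i).fun_mul (hτ i)] at hconst
  simp only [sum_apply, fderiv_fun_mul (hτ _) (hτ _), add_apply, smul_apply,
    smul_eq_mul, ← two_mul, ← Finset.mul_sum] at hconst
  linarith

theorem sum_mul_sum_pd_gyrotropic {P q : V3 → ℝ} {τ : V3 → V3} {x : V3}
    (hP : DifferentiableAt ℝ P x) (hq : DifferentiableAt ℝ q x)
    (hτ : ∀ i, DifferentiableAt ℝ (fun y => τ y i) x)
    (hunit : ∀ᶠ y in 𝓝 x, dot3 (τ y) (τ y) = 1) :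
    ∑ i, τ x i * ∑ j, pd j (fun y =>
        q y * (if i = j then 1 else 0) + (P y - q y) * τ y i * τ y j) x
      = fderiv ℝ P x (τ x) + (P x - q x) * div3 τ x := by
  have hexpand : ∀ i j, pd j (fun y =>
      q y * (if i = j then 1 else 0) + (P y - q y) * τ y i * τ y j) x
      = pd j q x * (if i = j then 1 else 0) + (pd j P x - pd j q x) * τ x i * τ x j
        + (P x - q x) * (pd j (fun y => τ y i) x * τ x j + τ x i * pd j (fun y => τ y j) x) := by
    intro i j
    simp only [pd]
    rw [fderiv_fun_add (by fun_prop) (by fun_prop), fderiv_mul_const hq,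
      fderiv_fun_mul (by fun_prop) (hτ j), fderiv_fun_mul (by fun_prop) (hτ i), fderiv_fun_sub hP hq]
    simp only [add_apply, smul_apply, sub_apply, smul_eq_mul]
    ring
  have hunit_x : dot3 (τ x) (τ x) = 1 := hunit.self_of_nhds
  have horth : ∑ j, τ x j * ∑ i, τ x i * pd j (fun y => τ y i) x = 0 := by
    simp [sum_mul_pd_eq_zero_of_eventually_dot3_self_eq_one hτ hunit]
  linear_combination (norm := skip)
    (fderiv ℝ P x (τ x) - fderiv ℝ q x (τ x) + (P x - q x) * div3 τ x) * hunit_x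
      + (P x - q x) * horth
  simp only [hexpand, dot3, div3, ← sum_mul_pd_eq_fderiv, Fin.sum_univ_three, Fin.isValue,
    Fin.reduceEq, if_true, if_false]
  ring

theorem div3_smul {f : V3 → ℝ} {F : V3 → V3} {x : V3} (hf : DifferentiableAt ℝ f x)
    (hF : DifferentiableAt ℝ F x) :
    div3 (fun y => f y • F y) x = f x * div3 F x + fderiv ℝ f x (F x) := by
  rw [div3, div3, ← sum_mul_pd_eq_fderiv, Finset.mul_sum, ← Finset.sum_add_distrib]
  refine Finset.sum_congr rfl fun i _ => ?_
  simp only [Pi.smul_apply, smul_eq_mul, pd]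
  rw [fderiv_fun_mul hf (differentiableAt_pi.1 hF i)]
  simp only [add_apply, smul_apply, smul_eq_mul]

theorem div3_tau3 {B : V3 → V3} {x : V3} (hB : DifferentiableAt ℝ B x)
    (hB₀ : norm3 (B x) ≠ 0) (hdiv : div3 B x = 0) :
    div3 (tau3 B) x = -fderiv ℝ (fun y => norm3 (B y)) x (tau3 B x) / norm3 (B x) := by
  have hnorm : DifferentiableAt ℝ (fun y => norm3 (B y)) x :=
    (differentiableAt_norm3 hB₀).comp x hB
  have htau : tau3 B = fun y => (norm3 (B y))⁻¹ • B y := by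
    funext y i
    simp [tau3, div_eq_inv_mul]
  have hB_eq : B x = norm3 (B x) • tau3 B x := by
    funext i
    simp [tau3, mul_div_cancel₀ _ hB₀]
  have hderiv : fderiv ℝ (fun y => norm3 (B y)) x (B x)
      = norm3 (B x) * fderiv ℝ (fun y => norm3 (B y)) x (tau3 B x) := by
    conv_lhs => rw [hB_eq]
    rw [map_smul, smul_eq_mul]
  conv_lhs => rw [htau]
  rw [div3_smul (f := fun y => (norm3 (B y))⁻¹) (hnorm.inv hB₀) hB, hdiv,
    fderiv_inv_apply hnorm hB₀, hderiv]
  field_simp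
  ring


/-- Field-aligned component of `(1/ρ)∇·𝗉 − ∇h` for the CGL gyrotropic
pressure tensor `𝗉 = p⊥ I + (p∥ − p⊥) τ⊗τ` with `p∥ = c∥(S) ρ³/B²`,
`p⊥ = c⊥(S) ρB`, `h = (3p∥+2p⊥)/(2ρ)`: it reduces to the entropy-gradient
source term `−( (p∥/2ρ) τ·∇ln c∥(S) + (p⊥/ρ) τ·∇ln c⊥(S) )`. -/
theorem pressure_divergence_entropy_form
    (B : V3 → V3) (ρ S : V3 → ℝ) (cpar cperp : ℝ → ℝ)
    (hB : ContDiff ℝ 2 B) (hρ : ContDiff ℝ 1 ρ) (hS : ContDiff ℝ 1 S)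
    (hcpar : ContDiff ℝ 1 cpar) (hcperp : ContDiff ℝ 1 cperp)
    (hcparpos : ∀ s, 0 < cpar s) (hcperppos : ∀ s, 0 < cperp s)
    (hρpos : ∀ x, 0 < ρ x) (hBpos : ∀ x, 0 < norm3 (B x))
    (hdiv : ∀ x, div3 B x = 0) :
    ∀ x : V3,
      let ppar : V3 → ℝ := fun y => cpar (S y) * (ρ y) ^ 3 / (norm3 (B y)) ^ 2
      let pperp : V3 → ℝ := fun y => cperp (S y) * ρ y * norm3 (B y)
      let ptens : V3 → Fin 3 → Fin 3 → ℝ := fun y i j =>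
        pperp y * (if i = j then 1 else 0) + (ppar y - pperp y) * tau3 B y i * tau3 B y j
      let h : V3 → ℝ := fun y => (3 * ppar y + 2 * pperp y) / (2 * ρ y)
      ∑ i, tau3 B x i *
          ((1 / ρ x) * (∑ j, pd j (fun y => ptens y i j) x) - pd i h x)
        = -((ppar x / (2 * ρ x)) *
              (∑ i, tau3 B x i * pd i (fun y => Real.log (cpar (S y))) x)
            + (pperp x / ρ x) *
              (∑ i, tau3 B x i * pd i (fun y => Real.log (cperp (S y))) x)) := by
  intro x
  dsimp only
  have hBd : DifferentiableAt ℝ B x := hB.differentiable (by norm_num) x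
  have hB₀ : norm3 (B x) ≠ 0 := (hBpos x).ne'
  have hnorm := differentiableAt_norm3 hB₀
  have hρd := hρ.differentiable one_ne_zero
  have hSd := hS.differentiable one_ne_zero
  have hcpard := hcpar.differentiable one_ne_zero
  have hcperpd := hcperp.differentiable one_ne_zero
  have hτ : ∀ i, DifferentiableAt ℝ (fun y => tau3 B y i) x := by
    intro i
    simp only [tau3]
    fun_prop (disch := exact hB₀)
  simp only [mul_sub, Finset.sum_sub_distrib, mul_left_comm (tau3 B x _) (1 / ρ x),
    ← Finset.mul_sum, sum_mul_pd_eq_fderiv]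
  rw [sum_mul_sum_pd_gyrotropic (by fun_prop (disch := exact pow_ne_zero 2 hB₀)) (by fun_prop) hτ
    (Eventually.of_forall fun y => dot3_tau3_self (hBpos y).ne'), div3_tau3 hBd hB₀ (hdiv x)]
  have key := cgl_fderiv_identity (c₁ := fun y => cpar (S y)) (c₂ := fun y => cperp (S y))
    (b := fun y => norm3 (B y)) (by fun_prop) (by fun_prop) (hρd x) (by fun_prop)
    (hcparpos _).ne' (hcperppos _).ne' (hρpos x).ne' hB₀ (tau3 B x)
  linear_combination key
end
end
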